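/- arXiv:2207.11371 — 3 statements merged into one kernel-verified Lean document; each statement's English description precedes it below -/
import Mathlib

section
/- Let G = (ℝ^d, ·) be a group with polynomial multiplication and inversion and identity 0, and let (φ_t)_{t>0} be a straight approximate group dilation structure for G with limit law ∙ and limit inverse x∙⁻¹. Then for every compact set K ⊆ ℝ^d there is a constant C_K such that for all x, y ∈ K and all t ≥ 1: ‖φ_{1/t}(φ_t(x)⁻¹ · φ_t(y))‖₂ ≤ C_K ‖y − x‖₂ and ‖φ_{1/t}(φ_t(x)⁻¹ · φ_t(y))‖₂ ≤ C_K ‖x∙⁻¹ ∙ y‖₂. -/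
/-!
Every coordinate of the rescaled map `δ_{1/t}(f(δ_t x, δ_t y))` of a polynomial map `f` is a
finite sum `∑ γ, t ^ γ q_γ(x, y)` of real powers of `t` with polynomial coefficients. If it
converges as `t → ∞` at every point, the coefficients of positive powers vanish identically;
hence for `t ≥ 1` the rescaled maps are Lipschitz on compact sets uniformly in `t`, and they
converge jointly in `(t, x, y)`. For `(x, y) ↦ x⁻¹ y`, which vanishes on the diagonal, this is
the first bound. For the multiplication, the limit law satisfies `x ∙ 0 = x` and
`x ∙ (x∙⁻¹ ∙ y) = y`, so its Lipschitz bound in the second variable gives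
`‖y - x‖ ≤ C ‖x∙⁻¹ ∙ y‖`, and with it the second bound.
-/

open Filter Topology MeasureTheory

noncomputable section

/-- Straight dilation with exponents `a`: `(dil a t u) i = t ^ (a i) * u i`. -/
def dil {d : ℕ} (a : Fin d → ℝ) (t : ℝ) (u : Fin d → ℝ) : Fin d → ℝ :=
  fun i => t ^ a i * u i

/-- A group structure on `ℝ^d` with identity `0` whose multiplication and inversion are
given coordinatewise by real polynomial functions of the coordinates. -/
structure PolyGroup (d : ℕ) where
  mul : (Fin d → ℝ) → (Fin d → ℝ) → (Fin d → ℝ)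
  inv : (Fin d → ℝ) → (Fin d → ℝ)
  mul_assoc' : ∀ x y z, mul (mul x y) z = mul x (mul y z)
  mul_zero' : ∀ x, mul x 0 = x
  zero_mul' : ∀ x, mul 0 x = x
  mul_inv' : ∀ x, mul x (inv x) = 0
  inv_mul' : ∀ x, mul (inv x) x = 0
  poly_mul : ∀ i, ∃ p : MvPolynomial (Fin d ⊕ Fin d) ℝ,
    ∀ x y, mul x y i = MvPolynomial.eval (Sum.elim x y) p
  poly_inv : ∀ i, ∃ p : MvPolynomial (Fin d) ℝ,
    ∀ x, inv x i = MvPolynomial.eval x p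

/-- Euclidean norm on `ℝ^d`. -/
def eucNorm {d : ℕ} (x : Fin d → ℝ) : ℝ := Real.sqrt (∑ i, x i ^ 2)

/-- A straight approximate group dilation structure for `G`, with the limit law `bullet`
and limit inverse `bulletInv`. -/
structure ApproxDil (d : ℕ) (G : PolyGroup d) where
  a : Fin d → ℝ
  a_pos : ∀ i, 0 < a i
  bulletInv : (Fin d → ℝ) → (Fin d → ℝ)
  bullet : (Fin d → ℝ) → (Fin d → ℝ) → (Fin d → ℝ)
  tendsto_inv : ∀ x,
    Tendsto (fun t : ℝ => dil a t⁻¹ (G.inv (dil a t x))) atTop (𝓝 (bulletInv x))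
  tendsto_mul : ∀ x y,
    Tendsto (fun t : ℝ => dil a t⁻¹ (G.mul (dil a t x) (dil a t y))) atTop (𝓝 (bullet x y))

open Metric
open scoped NNReal

section RpowSums

variable {V : Type*} [NormedAddCommGroup V] [NormedSpace ℝ V]

theorem tendsto_rpow_smul_of_nonpos {γ : ℝ} (hγ : γ ≤ 0) {c : ℝ → V} {c₀ : V}
    (hc : Tendsto c atTop (𝓝 c₀)) :
    Tendsto (fun t : ℝ => t ^ γ • c t) atTop (𝓝 (if γ = 0 then c₀ else 0)) := by
  rcases hγ.lt_or_eq with hγ | rfl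
  · rw [if_neg hγ.ne]
    simpa using (tendsto_rpow_neg_atTop (neg_pos.2 hγ)).smul hc
  · simpa using hc

theorem eq_zero_of_tendsto_sum_rpow_smul {Γ : Finset ℝ} {c : ℝ → V} {L : V}
    (h : Tendsto (fun t : ℝ => ∑ γ ∈ Γ, t ^ γ • c γ) atTop (𝓝 L))
    {γ : ℝ} (hγΓ : γ ∈ Γ) (hγ : 0 < γ) : c γ = 0 := by
  classical
  by_contra hne
  set P := Γ.filter fun γ => 0 < γ ∧ c γ ≠ 0
  have hP : P.Nonempty := ⟨γ, by simp [P, hγΓ, hγ, hne]⟩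
  set μ := P.max' hP
  obtain ⟨hμΓ, hμ, hcμ⟩ : μ ∈ Γ ∧ 0 < μ ∧ c μ ≠ 0 := by simpa [P] using P.max'_mem hP
  -- After division by `t ^ μ`, the sum tends both to `0` and to `c μ`.
  have h_zero : Tendsto (fun t : ℝ => ∑ δ ∈ Γ, t ^ (δ - μ) • c δ) atTop (𝓝 0) := by
    refine (zero_smul ℝ L ▸ (tendsto_rpow_neg_atTop hμ).smul h).congr' ?_
    filter_upwards [eventually_gt_atTop 0] with t ht
    simp_rw [Finset.smul_sum, smul_smul, ← Real.rpow_add ht, neg_add_eq_sub]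
  have h_coeff : Tendsto (fun t : ℝ => ∑ δ ∈ Γ, t ^ (δ - μ) • c δ) atTop (𝓝 (c μ)) := by
    rw [← if_pos hμΓ (t := c μ) (e := 0), ← Finset.sum_ite_eq' Γ μ c]
    refine tendsto_finsetSum Γ fun δ hδ => ?_
    by_cases hδμ : δ ≤ μ
    · simpa only [sub_eq_zero] using
        tendsto_rpow_smul_of_nonpos (sub_nonpos.2 hδμ) (tendsto_const_nhds (x := c δ))
    · have hcδ : c δ = 0 := by
        by_contra hcδ
        exact hδμ (P.le_max' δ (by simp [P, hδ, hcδ, hμ.trans (not_le.1 hδμ)]))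
      simp [hcδ, ne_of_gt (not_le.1 hδμ)]
  exact hcμ (tendsto_nhds_unique h_coeff h_zero)

end RpowSums

structure PowerExpansion {E V : Type*} [NormedAddCommGroup E] [NormedSpace ℝ E]
    [NormedAddCommGroup V] [NormedSpace ℝ V] (F : ℝ → E → V) where
  exponents : Finset ℝ
  coeff : ℝ → E → V
  contDiff_coeff : ∀ γ, ContDiff ℝ 1 (coeff γ)
  apply_eq_sum : ∀ t, 0 < t → ∀ z, F t z = ∑ γ ∈ exponents, t ^ γ • coeff γ z

namespace PowerExpansion

variable {E V : Type*} [NormedAddCommGroup E] [NormedSpace ℝ E]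
  [NormedAddCommGroup V] [NormedSpace ℝ V] {F : ℝ → E → V}

def ofSum {ι : Type*} (s : Finset ι) (e : ι → ℝ) (q : ι → E → V)
    (hq : ∀ k, ContDiff ℝ 1 (q k)) (hF : ∀ t, 0 < t → ∀ z, F t z = ∑ k ∈ s, t ^ e k • q k z) :
    PowerExpansion F where
  exponents := s.image e
  coeff γ z := ∑ k ∈ s with e k = γ, q k z
  contDiff_coeff _ := ContDiff.sum fun k _ => hq k
  apply_eq_sum t ht z := by
    rw [hF t ht z, ← Finset.sum_fiberwise_of_maps_to fun k hk => Finset.mem_image_of_mem e hk]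
    refine Finset.sum_congr rfl fun γ _ => ?_
    rw [Finset.smul_sum]
    exact Finset.sum_congr rfl fun k hk => by rw [(Finset.mem_filter.1 hk).2]

def pi {ι : Type*} [Fintype ι] [DecidableEq ι] {F : ℝ → E → ι → ℝ}
    (P : ∀ i, PowerExpansion fun t z => F t z i) : PowerExpansion F :=
  ofSum (Finset.univ.sigma fun i => (P i).exponents) (fun k => k.2)
    (fun k z => Pi.single k.1 ((P k.1).coeff k.2 z))
    (fun k => (ContinuousLinearMap.single ℝ (fun _ => ℝ) k.1).contDiff.comp
      ((P k.1).contDiff_coeff k.2))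
    fun t ht z => funext fun i => by
      simp [Finset.sum_apply, Finset.sum_sigma, Pi.single_apply, (P i).apply_eq_sum t ht z]

section Limit

variable {Φ : E → V}

theorem coeff_eq_zero_of_pos (P : PowerExpansion F)
    (hF : ∀ z, Tendsto (F · z) atTop (𝓝 (Φ z))) {γ : ℝ} (hγΓ : γ ∈ P.exponents) (hγ : 0 < γ) :
    P.coeff γ = 0 :=
  funext fun z => eq_zero_of_tendsto_sum_rpow_smul
    ((hF z).congr' (eventually_gt_atTop 0 |>.mono fun t ht => P.apply_eq_sum t ht z)) hγΓ hγ

theorem tendsto_apply_of_tendsto (P : PowerExpansion F)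
    (hF : ∀ z, Tendsto (F · z) atTop (𝓝 (Φ z))) {z : ℝ → E} {z₀ : E} (hz : Tendsto z atTop (𝓝 z₀)) :
    Tendsto (fun t => F t (z t)) atTop (𝓝 (Φ z₀)) := by
  have key : ∀ {w : ℝ → E} {w₀ : E}, Tendsto w atTop (𝓝 w₀) → Tendsto (fun t => F t (w t))
      atTop (𝓝 (∑ γ ∈ P.exponents, if γ = 0 then P.coeff γ w₀ else 0)) := by
    intro w w₀ hw
    refine (tendsto_finsetSum _ fun γ hγ => ?_).congr'
      (eventually_gt_atTop 0 |>.mono fun t ht => (P.apply_eq_sum t ht (w t)).symm)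
    rcases le_or_gt γ 0 with hγ0 | hγ0
    · exact tendsto_rpow_smul_of_nonpos hγ0
        (((P.contDiff_coeff γ).continuous.tendsto w₀).comp hw)
    · simp [P.coeff_eq_zero_of_pos hF hγ hγ0, hγ0.ne']
  rw [tendsto_nhds_unique (hF z₀) (key tendsto_const_nhds)]
  exact key hz

theorem exists_lipschitzOnWith (P : PowerExpansion F)
    (hF : ∀ z, Tendsto (F · z) atTop (𝓝 (Φ z))) {S : Set E} (hS : IsCompact S) :
    ∃ C : ℝ≥0, ∀ t, 1 ≤ t → LipschitzOnWith C (F t) S := by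
  choose C hC using fun γ =>
    (P.contDiff_coeff γ).locallyLipschitz.locallyLipschitzOn.exists_lipschitzOnWith_of_compact hS
  refine ⟨∑ γ ∈ P.exponents, C γ, fun t ht => LipschitzOnWith.of_dist_le_mul fun z hz z' hz' => ?_⟩
  have ht0 : 0 < t := zero_lt_one.trans_le ht
  rw [dist_eq_norm, P.apply_eq_sum t ht0, P.apply_eq_sum t ht0, ← Finset.sum_sub_distrib,
    NNReal.coe_sum, Finset.sum_mul]
  refine (norm_sum_le _ _).trans (Finset.sum_le_sum fun γ hγ => ?_)
  rw [← smul_sub, norm_smul]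
  rcases le_or_gt γ 0 with hγ0 | hγ0
  · have ht_pow : ‖t ^ γ‖ ≤ 1 := by
      rw [Real.norm_of_nonneg (Real.rpow_nonneg ht0.le γ)]
      exact Real.rpow_le_one_of_one_le_of_nonpos ht hγ0
    rw [← dist_eq_norm]
    exact (mul_le_of_le_one_left dist_nonneg ht_pow).trans ((hC γ).dist_le_mul z hz z' hz')
  · simpa [P.coeff_eq_zero_of_pos hF hγ hγ0] using mul_nonneg (C γ).coe_nonneg dist_nonneg

end Limit

end PowerExpansion

open MvPolynomial in
theorem MvPolynomial.eval_rpow_mul_eq_sum {σ : Type*} [Fintype σ] (p : MvPolynomial σ ℝ)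
    (w u : σ → ℝ) {t : ℝ} (ht : 0 < t) :
    eval (fun s => t ^ w s * u s) p =
      ∑ m ∈ p.support, t ^ (∑ s, w s * m s) * (coeff m p * ∏ s, u s ^ m s) := by
  rw [eval_eq']
  refine Finset.sum_congr rfl fun m _ => ?_
  simp_rw [mul_pow, Finset.prod_mul_distrib, Real.rpow_sum_of_pos ht,
    Real.rpow_mul_natCast ht.le]
  ring

section Rescale

variable {d : ℕ}

theorem dil_zero (a : Fin d → ℝ) (t : ℝ) : dil a t 0 = 0 := by
  funext i; simp [dil]

theorem dil_dil_inv (a : Fin d → ℝ) {t : ℝ} (ht : 0 < t) (w : Fin d → ℝ) :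
    dil a t (dil a t⁻¹ w) = w := by
  funext i
  simp [dil, Real.inv_rpow ht.le, (Real.rpow_pos_of_pos ht (a i)).ne']

theorem dil_inv_dil (a : Fin d → ℝ) {t : ℝ} (ht : 0 < t) (w : Fin d → ℝ) :
    dil a t⁻¹ (dil a t w) = w := by
  simpa using dil_dil_inv a (inv_pos.2 ht) w

def IsPolyMap₂ (f : (Fin d → ℝ) → (Fin d → ℝ) → (Fin d → ℝ)) : Prop :=
  ∀ i, ∃ p : MvPolynomial (Fin d ⊕ Fin d) ℝ, ∀ x y, f x y i = MvPolynomial.eval (Sum.elim x y) p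

open MvPolynomial in
theorem IsPolyMap₂.comp_left {f : (Fin d → ℝ) → (Fin d → ℝ) → (Fin d → ℝ)}
    {g : (Fin d → ℝ) → (Fin d → ℝ)} (hf : IsPolyMap₂ f)
    (hg : ∀ i, ∃ p : MvPolynomial (Fin d) ℝ, ∀ x, g x i = eval x p) :
    IsPolyMap₂ fun x y => f (g x) y := by
  choose q hq using hg
  intro i
  obtain ⟨p, hp⟩ := hf i
  refine ⟨bind₁ (Sum.elim (fun j => rename Sum.inl (q j)) (fun j => X (Sum.inr j))) p,
    fun x y => ?_⟩
  dsimp only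
  rw [hp, eval, eval, eval₂Hom_bind₁]
  congr 2
  funext s
  cases s <;> simp [eval_rename, hq]

def rescale (a : Fin d → ℝ) (f : (Fin d → ℝ) → (Fin d → ℝ) → (Fin d → ℝ)) (t : ℝ)
    (z : (Fin d → ℝ) × (Fin d → ℝ)) : Fin d → ℝ :=
  dil a t⁻¹ (f (dil a t z.1) (dil a t z.2))

theorem IsPolyMap₂.nonempty_powerExpansion_rescale {f : (Fin d → ℝ) → (Fin d → ℝ) → (Fin d → ℝ)}
    (hf : IsPolyMap₂ f) (a : Fin d → ℝ) : Nonempty (PowerExpansion (rescale a f)) := by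
  choose p hp using hf
  have h_elim : ∀ s, ContDiff ℝ 1 fun z : (Fin d → ℝ) × (Fin d → ℝ) => Sum.elim z.1 z.2 s
    | .inl j => (contDiff_apply ℝ ℝ j).comp contDiff_fst
    | .inr j => (contDiff_apply ℝ ℝ j).comp contDiff_snd
  refine ⟨PowerExpansion.pi fun i => PowerExpansion.ofSum (p i).support
    (fun m => -a i + ∑ s, Sum.elim a a s * m s)
    (fun m z => MvPolynomial.coeff m (p i) * ∏ s, Sum.elim z.1 z.2 s ^ m s)
    (fun m => contDiff_const.mul (contDiff_prod fun s _ => (h_elim s).pow _))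
    fun t ht z => ?_⟩
  have h_dil : Sum.elim (dil a t z.1) (dil a t z.2) =
      fun s => t ^ Sum.elim a a s * Sum.elim z.1 z.2 s := by
    funext s; cases s <;> rfl
  simp only [rescale, dil, hp, h_dil, MvPolynomial.eval_rpow_mul_eq_sum _ _ _ ht, Finset.mul_sum,
    Real.inv_rpow ht.le, ← Real.rpow_neg ht.le, smul_eq_mul, Real.rpow_add ht, mul_assoc]

end Rescale

theorem PolyGroup.isPolyMap₂_mul {d : ℕ} (G : PolyGroup d) : IsPolyMap₂ G.mul :=
  G.poly_mul

theorem PolyGroup.isPolyMap₂_inv_mul {d : ℕ} (G : PolyGroup d) :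
    IsPolyMap₂ fun x y => G.mul (G.inv x) y :=
  G.isPolyMap₂_mul.comp_left G.poly_inv

theorem prodMk_mem_closedBall_zero {E F : Type*} [SeminormedAddCommGroup E]
    [SeminormedAddCommGroup F] {u : E} {v : F} {R : ℝ} (hu : ‖u‖ ≤ R) (hv : ‖v‖ ≤ R) :
    (u, v) ∈ closedBall (0 : E × F) R :=
  mem_closedBall_zero_iff.2 (norm_prod_le_iff.2 ⟨hu, hv⟩)

namespace ApproxDil

variable {d : ℕ} {G : PolyGroup d} (D : ApproxDil d G)

theorem tendsto_rescale_mul {z : ℝ → (Fin d → ℝ) × (Fin d → ℝ)} {z₀ : (Fin d → ℝ) × (Fin d → ℝ)}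
    (hz : Tendsto z atTop (𝓝 z₀)) :
    Tendsto (fun t => rescale D.a G.mul t (z t)) atTop (𝓝 (D.bullet z₀.1 z₀.2)) := by
  obtain ⟨P⟩ := G.isPolyMap₂_mul.nonempty_powerExpansion_rescale D.a
  exact P.tendsto_apply_of_tendsto (fun z => D.tendsto_mul z.1 z.2) hz

theorem tendsto_rescale_mul_inv (x y : Fin d → ℝ) :
    Tendsto (fun t => rescale D.a (fun x y => G.mul (G.inv x) y) t (x, y)) atTop
      (𝓝 (D.bullet (D.bulletInv x) y)) :=
  (D.tendsto_rescale_mul ((D.tendsto_inv x).prodMk_nhds tendsto_const_nhds)).congr'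
    (eventually_gt_atTop 0 |>.mono fun t ht => by simp only [rescale, dil_dil_inv D.a ht])

theorem bullet_zero (x : Fin d → ℝ) : D.bullet x 0 = x :=
  tendsto_nhds_unique (D.tendsto_mul x 0) <| tendsto_const_nhds.congr' <|
    eventually_gt_atTop 0 |>.mono fun t ht => by
      simp only [dil_zero, G.mul_zero', dil_inv_dil D.a ht]

theorem bullet_bullet_bulletInv (x y : Fin d → ℝ) : D.bullet x (D.bullet (D.bulletInv x) y) = y :=
  tendsto_nhds_unique (D.tendsto_rescale_mul
    (tendsto_const_nhds.prodMk_nhds (D.tendsto_rescale_mul_inv x y))) <|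
    tendsto_const_nhds.congr' <| eventually_gt_atTop 0 |>.mono fun t ht => by
      simp only [rescale, dil_dil_inv D.a ht, ← G.mul_assoc', G.mul_inv', G.zero_mul',
        dil_inv_dil D.a ht]

theorem exists_norm_rescale_mul_inv_le (R : ℝ) :
    ∃ C : ℝ≥0, ∀ x y : Fin d → ℝ, ‖x‖ ≤ R → ‖y‖ ≤ R → ∀ t, 1 ≤ t →
      ‖rescale D.a (fun x y => G.mul (G.inv x) y) t (x, y)‖ ≤ C * ‖y - x‖ := by
  obtain ⟨P⟩ := G.isPolyMap₂_inv_mul.nonempty_powerExpansion_rescale D.a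
  obtain ⟨C, hC⟩ := P.exists_lipschitzOnWith (fun z => D.tendsto_rescale_mul_inv z.1 z.2)
    (isCompact_closedBall 0 R)
  refine ⟨C, fun x y hx hy t ht => ?_⟩
  have h_diag : rescale D.a (fun x y => G.mul (G.inv x) y) t (x, x) = 0 := by
    simp [rescale, G.inv_mul', dil_zero]
  simpa [h_diag, Prod.dist_eq, dist_eq_norm] using
    (hC t ht).dist_le_mul _ (prodMk_mem_closedBall_zero hx hy) _ (prodMk_mem_closedBall_zero hx hx)

theorem exists_norm_sub_le (R : ℝ) :
    ∃ C : ℝ≥0, ∀ x y : Fin d → ℝ, ‖x‖ ≤ R → ‖y‖ ≤ R →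
      ‖y - x‖ ≤ C * ‖D.bullet (D.bulletInv x) y‖ := by
  obtain ⟨C₁, hC₁⟩ := D.exists_norm_rescale_mul_inv_le R
  have h_bound : ∀ x y : Fin d → ℝ, ‖x‖ ≤ R → ‖y‖ ≤ R →
      ‖D.bullet (D.bulletInv x) y‖ ≤ C₁ * (2 * R) := fun x y hx hy =>
    le_of_tendsto (D.tendsto_rescale_mul_inv x y).norm <| eventually_ge_atTop 1 |>.mono
      fun t ht => (hC₁ x y hx hy t ht).trans <| by
        gcongr; linarith [norm_sub_le y x]
  set R' := max R (C₁ * (2 * R))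
  obtain ⟨P⟩ := G.isPolyMap₂_mul.nonempty_powerExpansion_rescale D.a
  have hM : ∀ z : (Fin d → ℝ) × (Fin d → ℝ), Tendsto (rescale D.a G.mul · z) atTop
      (𝓝 (D.bullet z.1 z.2)) := fun z => D.tendsto_mul z.1 z.2
  obtain ⟨C, hC⟩ := P.exists_lipschitzOnWith hM (isCompact_closedBall 0 R')
  have h_lim : LipschitzOnWith C (fun z : (Fin d → ℝ) × (Fin d → ℝ) => D.bullet z.1 z.2)
      (closedBall 0 R') :=
    (isClosed_setOfPred_lipschitzOnWith C _).mem_of_tendsto (tendsto_pi_nhds.2 hM)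
      (eventually_ge_atTop (1 : ℝ) |>.mono hC)
  refine ⟨C, fun x y hx hy => ?_⟩
  have hxR' : ‖x‖ ≤ R' := hx.trans (le_max_left _ _)
  simpa [D.bullet_bullet_bulletInv, D.bullet_zero, Prod.dist_eq, dist_eq_norm] using
    h_lim.dist_le_mul _
      (prodMk_mem_closedBall_zero hxR' ((h_bound x y hx hy).trans (le_max_right _ _)))
      (x, 0) (prodMk_mem_closedBall_zero hxR' (by simpa using (norm_nonneg x).trans hxR'))

end ApproxDil

theorem norm_le_eucNorm {d : ℕ} (x : Fin d → ℝ) : ‖x‖ ≤ eucNorm x :=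
  (pi_norm_le_iff_of_nonneg (Real.sqrt_nonneg _)).2 fun i =>
    Real.abs_le_sqrt (Finset.single_le_sum (fun j _ => sq_nonneg (x j)) (Finset.mem_univ i))

theorem eucNorm_le_sqrt_mul_norm {d : ℕ} (x : Fin d → ℝ) : eucNorm x ≤ √d * ‖x‖ := by
  rw [eucNorm, ← Real.sqrt_sq (norm_nonneg x), ← Real.sqrt_mul (Nat.cast_nonneg d)]
  gcongr
  calc ∑ i, x i ^ 2 ≤ ∑ _i : Fin d, ‖x‖ ^ 2 := Finset.sum_le_sum fun i _ => by
        simpa only [Real.norm_eq_abs, sq_abs] using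
          pow_le_pow_left₀ (abs_nonneg _) (norm_le_pi_norm x i) 2
    _ = d * ‖x‖ ^ 2 := by simp

theorem stmt_2 (d : ℕ) (G : PolyGroup d) (D : ApproxDil d G)
    (K : Set (Fin d → ℝ)) (hK : IsCompact K) :
    ∃ C : ℝ, ∀ x ∈ K, ∀ y ∈ K, ∀ t : ℝ, 1 ≤ t →
      eucNorm (dil D.a t⁻¹ (G.mul (G.inv (dil D.a t x)) (dil D.a t y))) ≤
        C * eucNorm (y - x) ∧
      eucNorm (dil D.a t⁻¹ (G.mul (G.inv (dil D.a t x)) (dil D.a t y))) ≤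
        C * eucNorm (D.bullet (D.bulletInv x) y) := by
  obtain ⟨R, hR⟩ := hK.isBounded.exists_norm_le
  obtain ⟨C₁, hC₁⟩ := D.exists_norm_rescale_mul_inv_le R
  obtain ⟨C₂, hC₂⟩ := D.exists_norm_sub_le R
  refine ⟨√d * C₁ * max 1 (C₂ : ℝ), fun x hx y hy t ht => ?_⟩
  have h_rescale : eucNorm (dil D.a t⁻¹ (G.mul (G.inv (dil D.a t x)) (dil D.a t y))) ≤
      √d * C₁ * ‖y - x‖ := by
    rw [mul_assoc]
    exact (eucNorm_le_sqrt_mul_norm _).trans (by gcongr; exact hC₁ x y (hR x hx) (hR y hy) t ht)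
  have h_le_sub : ‖y - x‖ ≤ max 1 (C₂ : ℝ) * eucNorm (y - x) :=
    (norm_le_eucNorm _).trans (le_mul_of_one_le_left (Real.sqrt_nonneg _) (le_max_left _ _))
  have h_le_bullet : ‖y - x‖ ≤ max 1 (C₂ : ℝ) * eucNorm (D.bullet (D.bulletInv x) y) :=
    (hC₂ x y (hR x hx) (hR y hy)).trans (by gcongr; exacts [le_max_right _ _, norm_le_eucNorm _])
  rw [mul_assoc, mul_assoc (√d * C₁)]
  exact ⟨h_rescale.trans (by gcongr), h_rescale.trans (by gcongr)⟩
end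
end

section
/- Let 𝔤 be a finite-dimensional real Lie algebra (with its canonical vector-space topology). Let 0 < w₁ < ⋯ < w_m be real numbers and let 𝔫₁,…,𝔫_m be linear subspaces of 𝔤 with 𝔤 = 𝔫₁ ⊕ ⋯ ⊕ 𝔫_m (internal direct sum), such that for all i, j ∈ {1,…,m} the bracket satisfies ⁅𝔫_i, 𝔫_j⁆ ⊆ ⊕_{ℓ : w_ℓ ≥ w_i + w_j} 𝔫_ℓ (in particular ⁅𝔫_i, 𝔫_j⁆ = 0 whenever w_i + w_j > w_m). For t > 0 let δ_t : 𝔤 → 𝔤 be the linear map acting as multiplication by t^{w_j} on 𝔫_j. Then for all x, y ∈ 𝔤 the limit ⁅x,y⁆∙ := lim_{t→∞} δ_t^{-1}(⁅δ_t(x), δ_t(y)⁆) exists; the resulting map (x,y) ↦ ⁅x,y⁆∙ is bilinear, alternating, and satisfies the Jacobi identity (so it is a Lie bracket on 𝔤), and δ_t(⁅x,y⁆∙) = ⁅δ_t(x), δ_t(y)⁆∙ for every t > 0 and all x, y. -/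
/-!
Decompose `x = ∑ xᵢ` along the grading, with projections `πᵢ`. Then
`δₜ⁻¹ ⁅δₜ x, δₜ y⁆ = ∑ i j ℓ, t ^ (wᵢ + wⱼ - w_ℓ) • π_ℓ ⁅xᵢ, yⱼ⁆`, and the filtration hypothesis
kills every term with a positive exponent, so the limit exists: it is the weight-preserving
part of the bracket. Each rescaled bracket is the conjugate of `⁅·,·⁆` by `δₜ`, hence a Lie
bracket, and the formula is jointly continuous in the coefficients and the second argument, so
the Jacobi identity passes to the limit. Equivariance is inherited in the same way from
`δₛ δₜ = δₛₜ`.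
-/

open Filter Topology

namespace DirectSum.IsInternal

variable {ι R M : Type*} [DecidableEq ι] [Semiring R] [AddCommMonoid M] [Module R M]
  {A : ι → Submodule R M} (h : IsInternal A)

noncomputable def proj (j : ι) : M →ₗ[R] M :=
  (A j).subtype ∘ₗ component R ι (fun i => A i) j ∘ₗ
    (LinearEquiv.ofBijective (coeLinearMap A) h).symm.toLinearMap

theorem proj_apply (j : ι) (x : M) :
    h.proj j x = (LinearEquiv.ofBijective (coeLinearMap A) h).symm x j := rfl

theorem proj_mem (j : ι) (x : M) : h.proj j x ∈ A j :=
  (component R ι (fun i => A i) j _).2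

theorem proj_of_mem {j : ι} {x : M} (hx : x ∈ A j) : h.proj j x = x := by
  rw [proj_apply, h.ofBijective_coeLinearMap_of_mem hx]

theorem proj_of_mem_ne {i j : ι} (hij : i ≠ j) {x : M} (hx : x ∈ A i) : h.proj j x = 0 := by
  rw [proj_apply, h.ofBijective_coeLinearMap_of_mem_ne hij hx, ZeroMemClass.coe_zero]

theorem proj_eq_zero_of_mem_biSup {s : Set ι} {j : ι} (hj : j ∉ s) {x : M}
    (hx : x ∈ ⨆ i ∈ s, A i) : h.proj j x = 0 := by
  refine (iSup₂_le fun i hi y hy => ?_ : ⨆ i ∈ s, A i ≤ LinearMap.ker (h.proj j)) hx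
  exact h.proj_of_mem_ne (ne_of_mem_of_not_mem hi hj) hy

theorem sum_proj [Fintype ι] (x : M) : ∑ j, h.proj j x = x := by
  refine Submodule.iSup_induction A (motive := fun x => ∑ j, h.proj j x = x)
    (h.submodule_iSup_eq_top ▸ Submodule.mem_top) (fun i y hy => ?_) (by simp)
    (fun y z hy hz => by simp only [map_add, Finset.sum_add_distrib, hy, hz])
  rw [Finset.sum_eq_single i (fun j _ hji => h.proj_of_mem_ne hji.symm hy) (by simp),
    h.proj_of_mem hy]

theorem apply_eq_sum_smul_proj [Fintype ι] {f : M →ₗ[R] M} {a : ι → R}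
    (hf : ∀ j, ∀ x ∈ A j, f x = a j • x) (x : M) : f x = ∑ j, a j • h.proj j x := by
  conv_lhs => rw [← h.sum_proj x, map_sum]
  exact Finset.sum_congr rfl fun j _ => hf j _ (h.proj_mem j x)

end DirectSum.IsInternal

def IsGradedDilation {ι V : Type*} [AddCommGroup V] [Module ℝ V] (𝔫 : ι → Submodule ℝ V)
    (w : ι → ℝ) (δ : ℝ → V →ₗ[ℝ] V) : Prop :=
  ∀ t : ℝ, 0 < t → ∀ j, ∀ x ∈ 𝔫 j, δ t x = t ^ w j • x

def IsFilteredBracket {ι V : Type*} [AddCommGroup V] [Module ℝ V] (𝔫 : ι → Submodule ℝ V)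
    (w : ι → ℝ) (B : V →ₗ[ℝ] V →ₗ[ℝ] V) : Prop :=
  ∀ i j (x y : V), x ∈ 𝔫 i → y ∈ 𝔫 j → B x y ∈ ⨆ ℓ ∈ {ℓ | w i + w j ≤ w ℓ}, 𝔫 ℓ

section Rescaling

variable {ι V : Type*} [DecidableEq ι] [Fintype ι] [AddCommGroup V] [Module ℝ V]
  {𝔫 : ι → Submodule ℝ V} {w : ι → ℝ} {δ : ℝ → V →ₗ[ℝ] V}

theorem dilation_one (h𝔫 : DirectSum.IsInternal 𝔫) (hδ : IsGradedDilation 𝔫 w δ) (x : V) :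
    δ 1 x = x := by
  simp only [h𝔫.apply_eq_sum_smul_proj (hδ 1 one_pos), Real.one_rpow, one_smul, h𝔫.sum_proj]

theorem dilation_mul (h𝔫 : DirectSum.IsInternal 𝔫) (hδ : IsGradedDilation 𝔫 w δ) {a b : ℝ}
    (ha : 0 < a) (hb : 0 < b) (x : V) : δ a (δ b x) = δ (a * b) x := by
  rw [h𝔫.apply_eq_sum_smul_proj (hδ b hb), h𝔫.apply_eq_sum_smul_proj (hδ (a * b) (mul_pos ha hb)),
    map_sum]
  refine Finset.sum_congr rfl fun j _ => ?_
  rw [map_smul, hδ a ha j _ (h𝔫.proj_mem j x), smul_smul, Real.mul_rpow ha.le hb.le, mul_comm]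

theorem dilation_dilation_inv (h𝔫 : DirectSum.IsInternal 𝔫) (hδ : IsGradedDilation 𝔫 w δ)
    {t : ℝ} (ht : 0 < t) (x : V) : δ t (δ t⁻¹ x) = x := by
  rw [dilation_mul h𝔫 hδ ht (inv_pos.2 ht), mul_inv_cancel₀ ht.ne', dilation_one h𝔫 hδ]

noncomputable def rescaledBracket (δ : ℝ → V →ₗ[ℝ] V) (B : V →ₗ[ℝ] V →ₗ[ℝ] V) (t : ℝ)
    (x y : V) : V :=
  δ t⁻¹ (B (δ t x) (δ t y))

noncomputable def gradedBracket (h𝔫 : DirectSum.IsInternal 𝔫) (w : ι → ℝ)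
    (B : V →ₗ[ℝ] V →ₗ[ℝ] V) : V →ₗ[ℝ] V →ₗ[ℝ] V :=
  ∑ i, ∑ j, ∑ ℓ,
    if w i + w j = w ℓ then (B.compl₁₂ (h𝔫.proj i) (h𝔫.proj j)).compr₂ (h𝔫.proj ℓ) else 0

theorem gradedBracket_apply (h𝔫 : DirectSum.IsInternal 𝔫) (w : ι → ℝ)
    (B : V →ₗ[ℝ] V →ₗ[ℝ] V) (x y : V) :
    gradedBracket h𝔫 w B x y =
      ∑ i, ∑ j, ∑ ℓ, if w i + w j = w ℓ then h𝔫.proj ℓ (B (h𝔫.proj i x) (h𝔫.proj j y)) else 0 := by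
  simp only [gradedBracket, LinearMap.sum_apply, DFunLike.ite_apply, LinearMap.compr₂_apply,
    LinearMap.compl₁₂_apply, LinearMap.zero_apply]

theorem rescaledBracket_eq_sum (h𝔫 : DirectSum.IsInternal 𝔫) (hδ : IsGradedDilation 𝔫 w δ)
    (B : V →ₗ[ℝ] V →ₗ[ℝ] V) {t : ℝ} (ht : 0 < t) (x y : V) :
    rescaledBracket δ B t x y =
      ∑ i, ∑ j, ∑ ℓ, t ^ (w i + w j - w ℓ) • h𝔫.proj ℓ (B (h𝔫.proj i x) (h𝔫.proj j y)) := by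
  have hinv : ∀ v, δ t⁻¹ v = ∑ ℓ, t ^ (-w ℓ) • h𝔫.proj ℓ v := fun v => by
    simp only [h𝔫.apply_eq_sum_smul_proj (hδ _ (inv_pos.2 ht)), Real.inv_rpow ht.le,
      Real.rpow_neg ht.le]
  simp only [rescaledBracket, h𝔫.apply_eq_sum_smul_proj (hδ t ht), map_sum, map_smul,
    LinearMap.sum_apply, LinearMap.smul_apply]
  simp only [hinv, Finset.smul_sum, smul_smul, ← Real.rpow_add ht, sub_eq_add_neg]
  rw [Finset.sum_comm]
  simp only [add_assoc, add_left_comm]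

theorem rescaledBracket_self {B : V →ₗ[ℝ] V →ₗ[ℝ] V} (hB : ∀ x, B x x = 0) (t : ℝ) (x : V) :
    rescaledBracket δ B t x x = 0 := by
  rw [rescaledBracket, hB, map_zero]

theorem rescaledBracket_jacobi (h𝔫 : DirectSum.IsInternal 𝔫) (hδ : IsGradedDilation 𝔫 w δ)
    {B : V →ₗ[ℝ] V →ₗ[ℝ] V} (hB : ∀ x y z, B x (B y z) + B y (B z x) + B z (B x y) = 0)
    {t : ℝ} (ht : 0 < t) (x y z : V) :
    rescaledBracket δ B t x (rescaledBracket δ B t y z) +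
      rescaledBracket δ B t y (rescaledBracket δ B t z x) +
      rescaledBracket δ B t z (rescaledBracket δ B t x y) = 0 := by
  simp only [rescaledBracket, dilation_dilation_inv h𝔫 hδ ht, ← map_add, hB, map_zero]

theorem rescaledBracket_dilation (h𝔫 : DirectSum.IsInternal 𝔫) (hδ : IsGradedDilation 𝔫 w δ)
    (B : V →ₗ[ℝ] V →ₗ[ℝ] V) {s t : ℝ} (hs : 0 < s) (ht : 0 < t) (x y : V) :
    rescaledBracket δ B t (δ s x) (δ s y) = δ s (rescaledBracket δ B (t * s) x y) := by
  rw [rescaledBracket, rescaledBracket, dilation_mul h𝔫 hδ ht hs, dilation_mul h𝔫 hδ ht hs,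
    dilation_mul h𝔫 hδ hs (inv_pos.2 (mul_pos ht hs))]
  congr 2
  field_simp

end Rescaling

theorem tendsto_rpow_atTop_of_nonpos {e : ℝ} (he : e ≤ 0) :
    Tendsto (fun t : ℝ => t ^ e) atTop (𝓝 (if e = 0 then 1 else 0)) := by
  rcases he.lt_or_eq with he | rfl
  · simpa [he.ne] using tendsto_rpow_neg_atTop (neg_pos.2 he)
  · simp

section Limit

variable {ι V : Type*} [DecidableEq ι] [Fintype ι] [NormedAddCommGroup V] [NormedSpace ℝ V]
  [FiniteDimensional ℝ V] {𝔫 : ι → Submodule ℝ V} {w : ι → ℝ} {δ : ℝ → V →ₗ[ℝ] V}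

theorem tendsto_rescaledBracket_of_tendsto (h𝔫 : DirectSum.IsInternal 𝔫)
    (hδ : IsGradedDilation 𝔫 w δ) {B : V →ₗ[ℝ] V →ₗ[ℝ] V} (hB : IsFilteredBracket 𝔫 w B)
    (x : V) {v : ℝ → V} {y : V} (hv : Tendsto v atTop (𝓝 y)) :
    Tendsto (fun t => rescaledBracket δ B t x (v t)) atTop (𝓝 (gradedBracket h𝔫 w B x y)) := by
  refine Tendsto.congr' ((eventually_gt_atTop 0).mono fun t ht =>
    (rescaledBracket_eq_sum h𝔫 hδ B ht x (v t)).symm) ?_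
  rw [gradedBracket_apply]
  refine tendsto_finsetSum _ fun i _ => tendsto_finsetSum _ fun j _ =>
    tendsto_finsetSum _ fun ℓ _ => ?_
  rcases lt_or_ge (w ℓ) (w i + w j) with hlt | hge
  · have hzero : ∀ u, h𝔫.proj ℓ (B (h𝔫.proj i x) (h𝔫.proj j u)) = 0 := fun u =>
      h𝔫.proj_eq_zero_of_mem_biSup (by simpa using hlt)
        (hB i j _ _ (h𝔫.proj_mem i x) (h𝔫.proj_mem j u))
    simp [hzero]
  · have hterm : Tendsto (fun t => h𝔫.proj ℓ (B (h𝔫.proj i x) (h𝔫.proj j (v t)))) atTop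
        (𝓝 (h𝔫.proj ℓ (B (h𝔫.proj i x) (h𝔫.proj j y)))) :=
      ((h𝔫.proj ℓ ∘ₗ B (h𝔫.proj i x) ∘ₗ h𝔫.proj j).continuous_of_finiteDimensional.tendsto
        y).comp hv
    convert (tendsto_rpow_atTop_of_nonpos (sub_nonpos.2 hge)).smul hterm using 2
    simp only [sub_eq_zero, ite_smul, one_smul, zero_smul]

theorem tendsto_rescaledBracket (h𝔫 : DirectSum.IsInternal 𝔫) (hδ : IsGradedDilation 𝔫 w δ)
    {B : V →ₗ[ℝ] V →ₗ[ℝ] V} (hB : IsFilteredBracket 𝔫 w B) (x y : V) :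
    Tendsto (fun t => rescaledBracket δ B t x y) atTop (𝓝 (gradedBracket h𝔫 w B x y)) :=
  tendsto_rescaledBracket_of_tendsto h𝔫 hδ hB x tendsto_const_nhds

theorem gradedBracket_self (h𝔫 : DirectSum.IsInternal 𝔫) (hδ : IsGradedDilation 𝔫 w δ)
    {B : V →ₗ[ℝ] V →ₗ[ℝ] V} (hB : IsFilteredBracket 𝔫 w B) (hB₀ : ∀ x, B x x = 0) (x : V) :
    gradedBracket h𝔫 w B x x = 0 :=
  tendsto_nhds_unique (tendsto_rescaledBracket h𝔫 hδ hB x x)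
    (by simpa only [rescaledBracket_self hB₀] using tendsto_const_nhds)

theorem gradedBracket_jacobi (h𝔫 : DirectSum.IsInternal 𝔫) (hδ : IsGradedDilation 𝔫 w δ)
    {B : V →ₗ[ℝ] V →ₗ[ℝ] V} (hB : IsFilteredBracket 𝔫 w B)
    (hjac : ∀ x y z, B x (B y z) + B y (B z x) + B z (B x y) = 0) (x y z : V) :
    gradedBracket h𝔫 w B x (gradedBracket h𝔫 w B y z) +
      gradedBracket h𝔫 w B y (gradedBracket h𝔫 w B z x) +
      gradedBracket h𝔫 w B z (gradedBracket h𝔫 w B x y) = 0 := by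
  have hlim : ∀ x y z, Tendsto (fun t => rescaledBracket δ B t x (rescaledBracket δ B t y z))
      atTop (𝓝 (gradedBracket h𝔫 w B x (gradedBracket h𝔫 w B y z))) := fun x y z =>
    tendsto_rescaledBracket_of_tendsto h𝔫 hδ hB x (tendsto_rescaledBracket h𝔫 hδ hB y z)
  exact tendsto_nhds_unique_of_eventuallyEq (((hlim x y z).add (hlim y z x)).add (hlim z x y))
    tendsto_const_nhds
    ((eventually_gt_atTop 0).mono fun t ht => rescaledBracket_jacobi h𝔫 hδ hjac ht x y z)

theorem dilation_gradedBracket (h𝔫 : DirectSum.IsInternal 𝔫) (hδ : IsGradedDilation 𝔫 w δ)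
    {B : V →ₗ[ℝ] V →ₗ[ℝ] V} (hB : IsFilteredBracket 𝔫 w B) {s : ℝ} (hs : 0 < s) (x y : V) :
    δ s (gradedBracket h𝔫 w B x y) = gradedBracket h𝔫 w B (δ s x) (δ s y) :=
  tendsto_nhds_unique_of_eventuallyEq
    (((δ s).continuous_of_finiteDimensional.tendsto _).comp
      ((tendsto_rescaledBracket h𝔫 hδ hB x y).comp (tendsto_id.atTop_mul_const hs)))
    (tendsto_rescaledBracket h𝔫 hδ hB (δ s x) (δ s y))
    ((eventually_gt_atTop 0).mono fun _ ht => (rescaledBracket_dilation h𝔫 hδ B hs ht x y).symm)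

end Limit

theorem stmt_6_general (V : Type*) [NormedAddCommGroup V] [NormedSpace ℝ V] [FiniteDimensional ℝ V]
    (B : V →ₗ[ℝ] V →ₗ[ℝ] V)
    (halt : ∀ x, B x x = 0)
    (hjac : ∀ x y z, B x (B y z) + B y (B z x) + B z (B x y) = 0)
    (m : ℕ) (w : Fin m → ℝ)
    (𝔫 : Fin m → Submodule ℝ V) (hinternal : DirectSum.IsInternal 𝔫)
    (hbracket : ∀ i j (x y : V), x ∈ 𝔫 i → y ∈ 𝔫 j →
      B x y ∈ ⨆ ℓ ∈ {ℓ : Fin m | w i + w j ≤ w ℓ}, 𝔫 ℓ)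
    (δ : ℝ → V →ₗ[ℝ] V)
    (hδ : ∀ t : ℝ, 0 < t → ∀ j, ∀ x ∈ 𝔫 j, δ t x = t ^ w j • x) :
    ∃ Bb : V → V → V,
      (∀ x y, Tendsto (fun t : ℝ => δ t⁻¹ (B (δ t x) (δ t y))) atTop (𝓝 (Bb x y))) ∧
      (∀ x x' y, Bb (x + x') y = Bb x y + Bb x' y) ∧
      (∀ (c : ℝ) (x y : V), Bb (c • x) y = c • Bb x y) ∧
      (∀ x y y', Bb x (y + y') = Bb x y + Bb x y') ∧
      (∀ (c : ℝ) (x y : V), Bb x (c • y) = c • Bb x y) ∧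
      (∀ x, Bb x x = 0) ∧
      (∀ x y z, Bb x (Bb y z) + Bb y (Bb z x) + Bb z (Bb x y) = 0) ∧
      (∀ t : ℝ, 0 < t → ∀ x y, δ t (Bb x y) = Bb (δ t x) (δ t y)) :=
  ⟨fun x y => gradedBracket hinternal w B x y, tendsto_rescaledBracket hinternal hδ hbracket,
    LinearMap.map_add₂ _, LinearMap.map_smul₂ _, fun x => map_add (gradedBracket hinternal w B x),
    fun c x => map_smul (gradedBracket hinternal w B x) c,
    gradedBracket_self hinternal hδ hbracket halt, gradedBracket_jacobi hinternal hδ hbracket hjac,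
    fun _ ht => dilation_gradedBracket hinternal hδ hbracket ht⟩

theorem stmt_6 (V : Type*) [NormedAddCommGroup V] [NormedSpace ℝ V] [FiniteDimensional ℝ V]
    (B : V →ₗ[ℝ] V →ₗ[ℝ] V)
    (halt : ∀ x, B x x = 0)
    (hjac : ∀ x y z, B x (B y z) + B y (B z x) + B z (B x y) = 0)
    (m : ℕ) (w : Fin m → ℝ) (hw_pos : ∀ j, 0 < w j) (hw_mono : StrictMono w)
    (𝔫 : Fin m → Submodule ℝ V) (hinternal : DirectSum.IsInternal 𝔫)
    (hbracket : ∀ i j (x y : V), x ∈ 𝔫 i → y ∈ 𝔫 j →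
      B x y ∈ ⨆ ℓ ∈ {ℓ : Fin m | w i + w j ≤ w ℓ}, 𝔫 ℓ)
    (δ : ℝ → V →ₗ[ℝ] V)
    (hδ : ∀ t : ℝ, 0 < t → ∀ j, ∀ x ∈ 𝔫 j, δ t x = t ^ w j • x) :
    ∃ Bb : V → V → V,
      (∀ x y, Tendsto (fun t : ℝ => δ t⁻¹ (B (δ t x) (δ t y))) atTop (𝓝 (Bb x y))) ∧
      (∀ x x' y, Bb (x + x') y = Bb x y + Bb x' y) ∧
      (∀ (c : ℝ) (x y : V), Bb (c • x) y = c • Bb x y) ∧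
      (∀ x y y', Bb x (y + y') = Bb x y + Bb x y') ∧
      (∀ (c : ℝ) (x y : V), Bb x (c • y) = c • Bb x y) ∧
      (∀ x, Bb x x = 0) ∧
      (∀ x y z, Bb x (Bb y z) + Bb y (Bb z x) + Bb z (Bb x y) = 0) ∧
      (∀ t : ℝ, 0 < t → ∀ x y, δ t (Bb x y) = Bb (δ t x) (δ t y)) :=
  stmt_6_general V B halt hjac m w 𝔫 hinternal hbracket δ hδ
end

section
/- Let (ℝ^d, ·) be a group with identity 0 whose multiplication has the triangular form (x·y)₁ = x₁ + y₁ and, for 2 ≤ i ≤ d, (x·y)_i = x_i + y_i + p̄_i(x₁,…,x_{i−1}, y₁,…,y_{i−1}), where each p̄_i is a real polynomial in the first i−1 coordinates of x and y with no constant term and no degree-one terms. Then for every compact set K ⊆ ℝ^d there is a constant C_K such that ‖z + z⁻¹‖₂ ≤ C_K‖z‖₂² for every z ∈ K, where z + z⁻¹ denotes the coordinatewise (vector) sum of z and its group inverse z⁻¹. -/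
open Filter Topology MeasureTheory

noncomputable section

lemma eucNorm_nonneg {d : ℕ} (x : Fin d → ℝ) : 0 ≤ eucNorm x :=
  Real.sqrt_nonneg _

lemma abs_le_eucNorm {d : ℕ} (x : Fin d → ℝ) (i : Fin d) : |x i| ≤ eucNorm x := by
  rw [← Real.sqrt_sq_eq_abs]
  exact Real.sqrt_le_sqrt (Finset.single_le_sum (fun j _ => sq_nonneg (x j))
    (Finset.mem_univ i))

lemma eucNorm_le {d : ℕ} (x : Fin d → ℝ) (B : ℝ) (hB : 0 ≤ B)
    (h : ∀ i, |x i| ≤ B) : eucNorm x ≤ Real.sqrt d * B := by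
  have : eucNorm x ≤ Real.sqrt (∑ _i : Fin d, B ^ 2) := by
    apply Real.sqrt_le_sqrt
    apply Finset.sum_le_sum
    intro i _
    calc x i ^ 2 = |x i| ^ 2 := (sq_abs _).symm
    _ ≤ B ^ 2 := pow_le_pow_left₀ (abs_nonneg _) (h i) 2
  refine this.trans ?_
  rw [Finset.sum_const, Finset.card_univ, Fintype.card_fin, nsmul_eq_mul,
    Real.sqrt_mul (by positivity), Real.sqrt_sq hB]

lemma poly_bound {σ : Type*} (p : MvPolynomial σ ℝ) (k : ℕ)
    (hdeg : ∀ m ∈ p.support, k ≤ m.sum fun _ e => e) (M : ℝ) (hM : 1 ≤ M) :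
    ∃ C : ℝ, 0 ≤ C ∧ ∀ (v : σ → ℝ) (N : ℝ), 0 ≤ N → N ≤ M →
      (∀ m ∈ p.support, ∀ j, m j ≠ 0 → |v j| ≤ N) →
      |MvPolynomial.eval v p| ≤ C * N ^ k := by
  refine ⟨∑ m ∈ p.support, |MvPolynomial.coeff m p| * M ^ (m.sum fun _ e => e),
    Finset.sum_nonneg fun m _ => by positivity, ?_⟩
  intro v N hN hNM hv
  rw [MvPolynomial.eval_eq, Finset.sum_mul]
  refine (Finset.abs_sum_le_sum_abs _ _).trans (Finset.sum_le_sum fun m hm => ?_)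
  rw [abs_mul]
  have hprod : |∏ j ∈ m.support, v j ^ m j| ≤ N ^ (m.sum fun _ e => e) := by
    rw [Finset.abs_prod, Finsupp.sum, ← Finset.prod_pow_eq_pow_sum]
    refine Finset.prod_le_prod (fun j _ => abs_nonneg _) (fun j hj => ?_)
    rw [abs_pow]
    exact pow_le_pow_left₀ (abs_nonneg _)
      (hv m hm j (Finsupp.mem_support_iff.mp hj)) _
  have hpow : N ^ (m.sum fun _ e => e) ≤ M ^ (m.sum fun _ e => e) * N ^ k := by
    obtain ⟨t, ht⟩ := Nat.exists_eq_add_of_le (hdeg m hm)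
    rw [ht, pow_add]
    calc N ^ k * N ^ t = N ^ t * N ^ k := mul_comm _ _
      _ ≤ M ^ t * N ^ k :=
          mul_le_mul_of_nonneg_right (pow_le_pow_left₀ hN hNM t) (by positivity)
      _ ≤ M ^ (k + t) * N ^ k :=
          mul_le_mul_of_nonneg_right
            (pow_le_pow_right₀ hM (Nat.le_add_left t k)) (by positivity)
  calc |MvPolynomial.coeff m p| * |∏ j ∈ m.support, v j ^ m j|
      ≤ |MvPolynomial.coeff m p| * (M ^ (m.sum fun _ e => e) * N ^ k) :=
        mul_le_mul_of_nonneg_left (hprod.trans hpow) (abs_nonneg _)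
    _ = |MvPolynomial.coeff m p| * M ^ (m.sum fun _ e => e) * N ^ k := by ring

theorem stmt_13 (d : ℕ)
    (mul : (Fin d → ℝ) → (Fin d → ℝ) → (Fin d → ℝ))
    (inv : (Fin d → ℝ) → (Fin d → ℝ))
    (P : Fin d → MvPolynomial (Fin d ⊕ Fin d) ℝ)
    (hmul : ∀ x y i, mul x y i = x i + y i + MvPolynomial.eval (Sum.elim x y) (P i))
    (hdeg : ∀ i, ∀ m ∈ (P i).support, 2 ≤ m.sum fun _ e => e)
    (htri : ∀ i, ∀ m ∈ (P i).support, ∀ j : Fin d,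
      m (Sum.inl j) ≠ 0 ∨ m (Sum.inr j) ≠ 0 → j < i)
    (hassoc : ∀ x y z, mul (mul x y) z = mul x (mul y z))
    (hmulzero : ∀ x, mul x 0 = x) (hzeromul : ∀ x, mul 0 x = x)
    (hmulinv : ∀ x, mul x (inv x) = 0) (hinvmul : ∀ x, mul (inv x) x = 0)
    (K : Set (Fin d → ℝ)) (hK : IsCompact K) :
    ∃ C : ℝ, ∀ z ∈ K, eucNorm (z + inv z) ≤ C * eucNorm z ^ 2 := by
  classical
  -- the identity coming from `mul z (inv z) = 0`
  have key : ∀ z (i : Fin d),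
      z i + inv z i = -(MvPolynomial.eval (Sum.elim z (inv z)) (P i)) := by
    intro z i
    have h0 : mul z (inv z) i = 0 := by rw [hmulinv z]; rfl
    rw [hmul] at h0
    linarith
  -- a bound on `eucNorm` on the compact set K
  obtain ⟨R, hR⟩ := hK.isBounded.exists_norm_le
  set Ms : ℝ := Real.sqrt d * max R 0 with hMs
  have hMs0 : 0 ≤ Ms := by positivity
  have hKnorm : ∀ z ∈ K, eucNorm z ≤ Ms := by
    intro z hz
    exact eucNorm_le z (max R 0) (le_max_right _ _)
      (fun i => (norm_le_pi_norm z i).trans ((hR z hz).trans (le_max_left _ _)))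
  -- by strong induction: a linear bound for coordinates of `inv z` on K
  have B : ∀ n : ℕ, ∃ C : ℝ, 0 ≤ C ∧ ∀ z ∈ K, ∀ j : Fin d, (j : ℕ) < n →
      |inv z j| ≤ C * eucNorm z := by
    intro n
    induction n with
    | zero => exact ⟨0, le_refl 0, fun z hz j hj => absurd hj (Nat.not_lt_zero _)⟩
    | succ n ih =>
      obtain ⟨C, hC0, hC⟩ := ih
      by_cases hn : n < d
      · set A : ℝ := max C 1 with hA
        have hA1 : (1 : ℝ) ≤ A := le_max_right _ _
        have hA0 : (0 : ℝ) ≤ A := zero_le_one.trans hA1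
        obtain ⟨Cp, hCp0, hCp⟩ := poly_bound (P (⟨n, hn⟩ : Fin d)) 1
          (fun m hm => le_trans (by norm_num) (hdeg _ m hm))
          (max 1 (A * Ms)) (le_max_left _ _)
        refine ⟨max C (1 + Cp * A), le_trans hC0 (le_max_left _ _), ?_⟩
        intro z hz j hj
        rcases Nat.lt_or_ge (j : ℕ) n with h | h
        · exact (hC z hz j h).trans
            (mul_le_mul_of_nonneg_right (le_max_left _ _) (eucNorm_nonneg z))
        · have hjn : (j : ℕ) = n := by omega
          have hPj : P j = P (⟨n, hn⟩ : Fin d) := by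
            congr 1
            exact Fin.ext hjn
          have heval : |MvPolynomial.eval (Sum.elim z (inv z)) (P (⟨n, hn⟩ : Fin d))|
              ≤ Cp * (A * eucNorm z) := by
            have := hCp (Sum.elim z (inv z)) (A * eucNorm z)
              (mul_nonneg hA0 (eucNorm_nonneg z))
              ((mul_le_mul_of_nonneg_left (hKnorm z hz) hA0).trans
                (le_max_right _ _)) ?_
            · simpa using this
            · intro m hm s hs
              rcases s with a | a
              · have : |z a| ≤ eucNorm z := abs_le_eucNorm z a
                calc |Sum.elim z (inv z) (Sum.inl a)| = |z a| := rfl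
                  _ ≤ 1 * eucNorm z := by rwa [one_mul]
                  _ ≤ A * eucNorm z :=
                    mul_le_mul_of_nonneg_right hA1 (eucNorm_nonneg z)
              · have halt : a < (⟨n, hn⟩ : Fin d) := htri _ m hm a (Or.inr hs)
                calc |Sum.elim z (inv z) (Sum.inr a)| = |inv z a| := rfl
                  _ ≤ C * eucNorm z := hC z hz a (by
                      have := Fin.lt_iff_val_lt_val.mp halt
                      simpa using this)
                  _ ≤ A * eucNorm z := mul_le_mul_of_nonneg_right
                      (le_max_left _ _) (eucNorm_nonneg z)
          have hstep : |inv z j| ≤ |z j|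
              + |MvPolynomial.eval (Sum.elim z (inv z)) (P (⟨n, hn⟩ : Fin d))| := by
            have hk := key z j
            rw [hPj] at hk
            have heq : inv z j = -(z j)
                - MvPolynomial.eval (Sum.elim z (inv z)) (P (⟨n, hn⟩ : Fin d)) := by
              linarith
            rw [heq]
            exact (abs_sub _ _).trans (by rw [abs_neg])
          refine hstep.trans ?_
          calc |z j| + |MvPolynomial.eval (Sum.elim z (inv z)) (P (⟨n, hn⟩ : Fin d))|
              ≤ eucNorm z + Cp * (A * eucNorm z) :=
                add_le_add (abs_le_eucNorm z j) heval
            _ = (1 + Cp * A) * eucNorm z := by ring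
            _ ≤ max C (1 + Cp * A) * eucNorm z :=
                mul_le_mul_of_nonneg_right (le_max_right _ _) (eucNorm_nonneg z)
      · exact ⟨C, hC0, fun z hz j hj => hC z hz j (by omega)⟩
  obtain ⟨C, hC0, hC⟩ := B d
  set A : ℝ := max C 1 with hA
  have hA1 : (1 : ℝ) ≤ A := le_max_right _ _
  have hA0 : (0 : ℝ) ≤ A := zero_le_one.trans hA1
  -- quadratic bounds for each P i
  have hPB : ∀ i : Fin d, ∃ Cp : ℝ, 0 ≤ Cp ∧ ∀ (v : Fin d ⊕ Fin d → ℝ) (N : ℝ),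
      0 ≤ N → N ≤ max 1 (A * Ms) →
      (∀ m ∈ (P i).support, ∀ j, m j ≠ 0 → |v j| ≤ N) →
      |MvPolynomial.eval v (P i)| ≤ Cp * N ^ 2 :=
    fun i => poly_bound (P i) 2 (hdeg i) (max 1 (A * Ms)) (le_max_left _ _)
  choose Cp hCp0 hCp using hPB
  set D : ℝ := ∑ i, Cp i with hD
  have hD0 : 0 ≤ D := Finset.sum_nonneg fun i _ => hCp0 i
  have hDi : ∀ i, Cp i ≤ D := fun i =>
    Finset.single_le_sum (fun j _ => hCp0 j) (Finset.mem_univ i)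
  refine ⟨Real.sqrt d * (D * A ^ 2), ?_⟩
  intro z hz
  have hcoord : ∀ i : Fin d, |(z + inv z) i| ≤ D * A ^ 2 * eucNorm z ^ 2 := by
    intro i
    have h1 : (z + inv z) i = -(MvPolynomial.eval (Sum.elim z (inv z)) (P i)) := by
      rw [Pi.add_apply]; exact key z i
    rw [h1, abs_neg]
    have h2 : |MvPolynomial.eval (Sum.elim z (inv z)) (P i)|
        ≤ Cp i * (A * eucNorm z) ^ 2 := by
      refine hCp i (Sum.elim z (inv z)) (A * eucNorm z)
        (mul_nonneg hA0 (eucNorm_nonneg z))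
        ((mul_le_mul_of_nonneg_left (hKnorm z hz) hA0).trans (le_max_right _ _)) ?_
      intro m hm s _
      rcases s with a | a
      · calc |Sum.elim z (inv z) (Sum.inl a)| = |z a| := rfl
          _ ≤ 1 * eucNorm z := by rw [one_mul]; exact abs_le_eucNorm z a
          _ ≤ A * eucNorm z := mul_le_mul_of_nonneg_right hA1 (eucNorm_nonneg z)
      · calc |Sum.elim z (inv z) (Sum.inr a)| = |inv z a| := rfl
          _ ≤ C * eucNorm z := hC z hz a a.isLt
          _ ≤ A * eucNorm z := mul_le_mul_of_nonneg_right
              (le_max_left _ _) (eucNorm_nonneg z)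
    refine h2.trans ?_
    have : Cp i * (A * eucNorm z) ^ 2 ≤ D * (A * eucNorm z) ^ 2 :=
      mul_le_mul_of_nonneg_right (hDi i) (sq_nonneg _)
    calc Cp i * (A * eucNorm z) ^ 2 ≤ D * (A * eucNorm z) ^ 2 := this
      _ = D * A ^ 2 * eucNorm z ^ 2 := by ring
  calc eucNorm (z + inv z) ≤ Real.sqrt d * (D * A ^ 2 * eucNorm z ^ 2) :=
        eucNorm_le _ _ (mul_nonneg (mul_nonneg hD0 (sq_nonneg A)) (sq_nonneg _)) hcoord
    _ = Real.sqrt d * (D * A ^ 2) * eucNorm z ^ 2 := by ring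
end
end
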